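/- arXiv:2310.08407 — 6 statements merged into one kernel-verified Lean document; each statement's English description precedes it below -/
import Mathlib

section
/- Suppose u is defined implicitly by the quadric ansatz X^T M(u) X = C with Q̇ = X^T Ṁ X ≠ 0, so that u_{x^k} = −(2/Q̇) M_{kj} x^j, and suppose M satisfies g Ṁ = M b M for a function g(u). If T = m · b^{ij}(u) u_{x^i} u_{x^j} with m a constant, then (Q̇ · T)/4 = m g, i.e. the quantity (X^T Ṁ X)·T/4 depends on u only. -/
open Matrix BigOperators

/-- If `u_{xᵏ} = −(2/Q̇) Mₖⱼ xʲ` (quadric ansatz), `g Ṁ = M b M`, and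
`T = m bⁱʲ u_{xⁱ} u_{xʲ}`, then `Q̇ T / 4 = m g`, a function of `u` only. -/
theorem stmt3 {n : ℕ} (M Md b : Matrix (Fin n) (Fin n) ℝ) (g m : ℝ)
    (X : Fin n → ℝ)
    (hMsymm : M.IsSymm) (hbsymm : b.IsSymm)
    (hQd : X ⬝ᵥ Md.mulVec X ≠ 0)
    (hODE : g • Md = M * b * M)
    (p : Fin n → ℝ)
    (hp : ∀ k, p k = -(2 / (X ⬝ᵥ Md.mulVec X)) * (M.mulVec X) k) :
    (X ⬝ᵥ Md.mulVec X) * (m * ∑ i, ∑ j, b i j * p i * p j) / 4 = m * g := by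
  set Q := X ⬝ᵥ Md.mulVec X with hQ
  have hp' : p = (-(2 / Q)) • M.mulVec X := by
    funext k; simp [hp k, smul_eq_mul]
  have h1 : ∑ i, ∑ j, b i j * p i * p j = p ⬝ᵥ b.mulVec p := by
    simp only [dotProduct, Matrix.mulVec, dotProduct, Finset.mul_sum]
    exact Finset.sum_congr rfl fun i _ => Finset.sum_congr rfl fun j _ => by ring
  have h3 : X ⬝ᵥ (M * b * M).mulVec X = g * Q := by
    rw [← hODE, smul_mulVec, dotProduct_smul, smul_eq_mul]
  have h2 : p ⬝ᵥ b.mulVec p = (2 / Q)^2 * (g * Q) := by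
    rw [hp', smul_dotProduct, mulVec_smul, dotProduct_smul, smul_eq_mul, smul_eq_mul,
      ← h3]
    have hMX : M.mulVec X = X ᵥ* M := by
      rw [← hMsymm.eq, mulVec_transpose, hMsymm.eq]
    have hv : M.mulVec X ⬝ᵥ b.mulVec (M.mulVec X)
        = X ⬝ᵥ (M * b * M).mulVec X := by
      conv_rhs => rw [← mulVec_mulVec, ← mulVec_mulVec, dotProduct_mulVec, ← hMX]
    rw [hv]; ring
  rw [h1, h2]
  field_simp
  ring
end

section
/- Let c > 0 be a constant and define u(x,y,z) = ln( (x² + y² + √((x²+y²)² + 4c z²)) / c ) on the region where x²+y² > 0 and z ≠ 0. Then u satisfies u_{xx} + u_{yy} + (e^u)_{zz} − (e^u / z) u_z = 0. -/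
/-!
With `r = x² + y²` and `S = √(r² + 4cz²)` one has `eᵘ = (r + S) / c`. Since
`log (t + √(t² + K))` has derivative `1 / √(t² + K)`, this gives `u_x = 2x / S`,
`u_y = 2y / S` and `(eᵘ)_z = 4z / S`. As `u_z = (eᵘ)_z / eᵘ`, the last term of the equation
is `4 / S`, while `u_xx + u_yy + (eᵘ)_zz = 8 / S - 4 (r² + 4cz²) / S³ = 4 / S`.
-/

open Real

lemma add_sqrt_sq_add_pos {K : ℝ} (hK : 0 < K) (t : ℝ) : 0 < t + √(t ^ 2 + K) := by
  have : |t| < √(t ^ 2 + K) := by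
    rw [← sqrt_sq_eq_abs]
    exact sqrt_lt_sqrt (sq_nonneg t) (by linarith)
  linarith [neg_abs_le t]

section

variable {p q : ℝ → ℝ} {p' q' s : ℝ}

theorem HasDerivAt.log_add_sqrt_sq_add_div {K c : ℝ} (hp : HasDerivAt p p' s) (hK : 0 < K)
    (hc : c ≠ 0) :
    HasDerivAt (fun s => Real.log ((p s + √(p s ^ 2 + K)) / c)) (p' / √(p s ^ 2 + K)) s := by
  have hpos := add_sqrt_sq_add_pos hK (p s)
  have hq : HasDerivAt (fun s => p s ^ 2 + K) (2 * p s ^ 1 * p') s := (hp.pow 2).add_const K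
  refine (((hp.add (hq.sqrt (by positivity))).div_const c).log
    (div_ne_zero hpos.ne' hc)).congr_deriv ?_
  simp only [Pi.add_apply]
  field_simp
  ring

theorem HasDerivAt.mul_div_sqrt (k : ℝ) (hq : HasDerivAt q q' s) (hpos : 0 < q s) :
    HasDerivAt (fun s => k * s / √(q s)) (k / √(q s) - k * s * q' / (2 * √(q s) ^ 3)) s := by
  have hS : 0 < √(q s) := sqrt_pos.mpr hpos
  refine (((hasDerivAt_id s).const_mul k).div (hq.sqrt hpos.ne') hS.ne').congr_deriv ?_
  simp only [id]
  field_simp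

end

theorem hasDerivAt_add_sqrt_sq_add_mul_sq_div {r c s : ℝ} (hc : c ≠ 0)
    (hpos : 0 < r ^ 2 + 4 * c * s ^ 2) :
    HasDerivAt (fun s => (r + √(r ^ 2 + 4 * c * s ^ 2)) / c)
      (4 * s / √(r ^ 2 + 4 * c * s ^ 2)) s := by
  have hq : HasDerivAt (fun s => r ^ 2 + 4 * c * s ^ 2) (4 * c * (2 * s)) s := by
    simpa using ((hasDerivAt_pow 2 s).const_mul (4 * c)).const_add (r ^ 2)
  refine (((hq.sqrt hpos.ne').const_add r).div_const c).congr_deriv ?_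
  field_simp

lemma deriv_deriv_log_sq_add {a K c : ℝ} (hK : 0 < K) (hc : c ≠ 0) (x : ℝ) :
    deriv (deriv fun s => log ((s ^ 2 + a + √((s ^ 2 + a) ^ 2 + K)) / c)) x =
      2 / √((x ^ 2 + a) ^ 2 + K)
        - 2 * x * (2 * (x ^ 2 + a) * (2 * x)) / (2 * √((x ^ 2 + a) ^ 2 + K) ^ 3) := by
  have hp (s : ℝ) : HasDerivAt (fun s => s ^ 2 + a) (2 * s) s := by
    simpa using (hasDerivAt_pow 2 s).add_const a
  have hq : HasDerivAt (fun s => (s ^ 2 + a) ^ 2 + K) (2 * (x ^ 2 + a) * (2 * x)) x := by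
    simpa using ((hp x).pow 2).add_const K
  have hux : deriv (fun s => log ((s ^ 2 + a + √((s ^ 2 + a) ^ 2 + K)) / c)) =
      fun s => 2 * s / √((s ^ 2 + a) ^ 2 + K) :=
    funext fun s => ((hp s).log_add_sqrt_sq_add_div hK hc).deriv
  rw [hux]
  exact (hq.mul_div_sqrt 2 (by positivity)).deriv

lemma deriv_deriv_add_sqrt_sq_add_mul_sq_div {r c : ℝ} (hr : r ≠ 0) (hc : 0 < c) (z : ℝ) :
    deriv (deriv fun s => (r + √(r ^ 2 + 4 * c * s ^ 2)) / c) z =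
      4 / √(r ^ 2 + 4 * c * z ^ 2)
        - 4 * z * (4 * c * (2 * z)) / (2 * √(r ^ 2 + 4 * c * z ^ 2) ^ 3) := by
  have hpos (s : ℝ) : 0 < r ^ 2 + 4 * c * s ^ 2 := by positivity
  have hq : HasDerivAt (fun s => r ^ 2 + 4 * c * s ^ 2) (4 * c * (2 * z)) z := by
    simpa using ((hasDerivAt_pow 2 z).const_mul (4 * c)).const_add (r ^ 2)
  rw [funext fun s => (hasDerivAt_add_sqrt_sq_add_mul_sq_div hc.ne' (hpos s)).deriv]
  exact (hq.mul_div_sqrt 4 (hpos z)).deriv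

/-- The explicit function `u = ln((x²+y²+√((x²+y²)²+4cz²))/c)` solves
`u_{xx} + u_{yy} + (eᵘ)_{zz} − (eᵘ/z) u_z = 0` where `x²+y² > 0` and `z ≠ 0`. -/
theorem stmt7 (c : ℝ) (hc : 0 < c)
    (u : ℝ → ℝ → ℝ → ℝ)
    (hu : ∀ x y z, u x y z =
      Real.log ((x^2 + y^2 + Real.sqrt ((x^2 + y^2)^2 + 4*c*z^2)) / c)) :
    ∀ x y z : ℝ, 0 < x^2 + y^2 → z ≠ 0 →
      deriv (deriv (fun s => u s y z)) x
      + deriv (deriv (fun s => u x s z)) y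
      + deriv (deriv (fun s => Real.exp (u x y s))) z
      - (Real.exp (u x y z) / z) * deriv (fun s => u x y s) z = 0 := by
  intro x y z hxy hz
  have hK : 0 < 4 * c * z ^ 2 := by positivity
  have hEpos (s : ℝ) : 0 < (x ^ 2 + y ^ 2 + √((x ^ 2 + y ^ 2) ^ 2 + 4 * c * s ^ 2)) / c :=
    div_pos (add_pos_of_pos_of_nonneg hxy (sqrt_nonneg _)) hc
  have hE (s : ℝ) :
      exp (u x y s) = (x ^ 2 + y ^ 2 + √((x ^ 2 + y ^ 2) ^ 2 + 4 * c * s ^ 2)) / c := by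
    rw [hu, exp_log (hEpos s)]
  have uxx := deriv_deriv_log_sq_add (a := y ^ 2) hK hc.ne' x
  have uyy := deriv_deriv_log_sq_add (a := x ^ 2) hK hc.ne' y
  have ezz := deriv_deriv_add_sqrt_sq_add_mul_sq_div hxy.ne' hc z
  have uz := ((hasDerivAt_add_sqrt_sq_add_mul_sq_div hc.ne' (by positivity)).log
    (hEpos z).ne').deriv
  simp only [← hu] at uxx uz
  simp only [add_comm _ (x ^ 2), ← hu] at uyy
  simp only [← hE] at ezz
  rw [uxx, uyy, ezz, uz, hE]
  set S := √((x ^ 2 + y ^ 2) ^ 2 + 4 * c * z ^ 2)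
  have hS2 : S ^ 2 = (x ^ 2 + y ^ 2) ^ 2 + 4 * c * z ^ 2 := sq_sqrt (by positivity)
  have hSpos : 0 < S := by positivity
  field_simp
  linear_combination 4 * hS2
end

section
/- Let α ≠ 0 and β be constants and define u(x, y₁, y₂, t) = α (y₁² + y₂² − 4 x t)/t² + β for t ≠ 0. Then u satisfies the 4-dimensional dKP Einstein–Weyl equation u_{xt} − (u u_x)_x − u_{y₁y₁} − u_{y₂y₂} + u_x² = 0. -/
/-!
For fixed `t ≠ 0` the solution is affine in `x` with slope `-4α/t` and quadratic in each `yᵢ`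
with leading coefficient `α/t²`. Hence `u_{xt} = 4α/t²`, `(u u_x)_x = u_x² = 16α²/t²` and
`u_{yᵢyᵢ} = 2α/t²`, and the terms of the equation cancel.
-/

open Topology

lemma deriv_affine (a b x : ℝ) : deriv (fun r => a * r + b) x = a := by
  simp [deriv_add_const]

lemma deriv_affine_mul_deriv (a b x : ℝ) :
    deriv (fun r => (a * r + b) * deriv (fun r => a * r + b) r) x = a ^ 2 := by
  simp only [deriv_affine]
  rw [deriv_mul_const_field, deriv_affine, sq]

lemma deriv_deriv_quadratic (a b y : ℝ) : deriv (deriv fun s => a * s ^ 2 + b) y = 2 * a := by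
  have h : deriv (fun s => a * s ^ 2 + b) = fun s => 2 * a * s + 0 := by
    funext s
    rw [(((hasDerivAt_pow 2 s).const_mul a).add_const b).deriv]
    norm_num
    ring
  rw [h, deriv_affine]

/-- Solution (4.6) of the paper, obtained from the quadric ansatz. -/
noncomputable def dKPQuadric (α β x y₁ y₂ t : ℝ) : ℝ := α * (y₁ ^ 2 + y₂ ^ 2 - 4 * x * t) / t ^ 2 + β

section Slices

variable (α β x y₁ y₂ : ℝ) {t : ℝ}

lemma dKPQuadric_slice_x (ht : t ≠ 0) :
    (fun r => dKPQuadric α β r y₁ y₂ t)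
      = fun r => -4 * α / t * r + (α * (y₁ ^ 2 + y₂ ^ 2) / t ^ 2 + β) := by
  funext r
  simp only [dKPQuadric]
  field_simp
  ring

lemma dKPQuadric_slice_y₁ (ht : t ≠ 0) :
    (fun s => dKPQuadric α β x s y₂ t)
      = fun s => α / t ^ 2 * s ^ 2 + (α * (y₂ ^ 2 - 4 * x * t) / t ^ 2 + β) := by
  funext s
  simp only [dKPQuadric]
  field_simp
  ring

lemma dKPQuadric_slice_y₂ (ht : t ≠ 0) :
    (fun s => dKPQuadric α β x y₁ s t)
      = fun s => α / t ^ 2 * s ^ 2 + (α * (y₁ ^ 2 - 4 * x * t) / t ^ 2 + β) := by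
  funext s
  simp only [dKPQuadric]
  field_simp
  ring

lemma deriv_dKPQuadric_x (ht : t ≠ 0) :
    deriv (fun r => dKPQuadric α β r y₁ y₂ t) x = -4 * α / t := by
  rw [dKPQuadric_slice_x α β y₁ y₂ ht, deriv_affine]

lemma deriv_deriv_dKPQuadric_x_t (ht : t ≠ 0) :
    deriv (fun s => deriv (fun r => dKPQuadric α β r y₁ y₂ s) x) t = 4 * α / t ^ 2 := by
  have h : (fun s => deriv (fun r => dKPQuadric α β r y₁ y₂ s) x) =ᶠ[𝓝 t] fun s => -4 * α * s⁻¹ :=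
    (eventually_ne_nhds ht).mono fun s hs => by
      dsimp only
      rw [deriv_dKPQuadric_x α β x y₁ y₂ hs, div_eq_mul_inv]
  rw [h.deriv_eq, ((hasDerivAt_inv ht).const_mul (-4 * α)).deriv]
  ring

lemma deriv_dKPQuadric_mul_deriv_x (ht : t ≠ 0) :
    deriv (fun r => dKPQuadric α β r y₁ y₂ t * deriv (fun r' => dKPQuadric α β r' y₁ y₂ t) r) x
      = (-4 * α / t) ^ 2 := by
  show deriv (fun r => (fun r => dKPQuadric α β r y₁ y₂ t) r
    * deriv (fun r' => dKPQuadric α β r' y₁ y₂ t) r) x = _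
  rw [dKPQuadric_slice_x α β y₁ y₂ ht, deriv_affine_mul_deriv]

end Slices

theorem stmt13_general (α β : ℝ)
    (u : ℝ → ℝ → ℝ → ℝ → ℝ)
    (hu : ∀ x y₁ y₂ t, u x y₁ y₂ t = α * (y₁^2 + y₂^2 - 4*x*t)/t^2 + β) :
    ∀ x y₁ y₂ t : ℝ, t ≠ 0 →
      deriv (fun s => deriv (fun r => u r y₁ y₂ s) x) t
      - deriv (fun r => u r y₁ y₂ t * deriv (fun r' => u r' y₁ y₂ t) r) x
      - deriv (deriv (fun s => u x s y₂ t)) y₁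
      - deriv (deriv (fun s => u x y₁ s t)) y₂
      + (deriv (fun r => u r y₁ y₂ t) x)^2 = 0 := by
  intro x y₁ y₂ t ht
  obtain rfl : u = dKPQuadric α β := by
    funext x y₁ y₂ t
    exact hu x y₁ y₂ t
  rw [deriv_deriv_dKPQuadric_x_t α β x y₁ y₂ ht, deriv_dKPQuadric_mul_deriv_x α β x y₁ y₂ ht,
    deriv_dKPQuadric_x α β x y₁ y₂ ht,
    dKPQuadric_slice_y₁ α β x y₂ ht, deriv_deriv_quadratic,
    dKPQuadric_slice_y₂ α β x y₁ ht, deriv_deriv_quadratic]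
  field_simp
  ring

/-- `u = α(y₁² + y₂² − 4xt)/t² + β` (`α ≠ 0`) solves the 4-dimensional dKP
Einstein–Weyl equation `u_{xt} − (u u_x)_x − u_{y₁y₁} − u_{y₂y₂} + u_x² = 0`. -/
theorem stmt13 (α β : ℝ) (hα : α ≠ 0)
    (u : ℝ → ℝ → ℝ → ℝ → ℝ)
    (hu : ∀ x y₁ y₂ t, u x y₁ y₂ t = α * (y₁^2 + y₂^2 - 4*x*t)/t^2 + β) :
    ∀ x y₁ y₂ t : ℝ, t ≠ 0 →
      deriv (fun s => deriv (fun r => u r y₁ y₂ s) x) t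
      - deriv (fun r => u r y₁ y₂ t * deriv (fun r' => u r' y₁ y₂ t) r) x
      - deriv (deriv (fun s => u x s y₂ t)) y₁
      - deriv (deriv (fun s => u x y₁ s t)) y₂
      + (deriv (fun r => u r y₁ y₂ t) x)^2 = 0 :=
  stmt13_general α β u hu
end

section
/- Let n > 2 be an integer, β a constant, and define u(x, y₁,…,y_n, t) = (n/8)·(y₁² + ⋯ + y_n² − 4 x t)/t² + β for t ≠ 0. Then u satisfies u_{xt} − (u u_x)_x − Σ_{i=1}^n u_{y_i y_i} + (2(n−1)/n) u_x² = 0. Moreover, for α ≠ n/8 (and n > 2) the function α(Σ y_i² − 4xt)/t² + β is not a solution. -/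
open BigOperators

private lemma dlin (m b x : ℝ) : deriv (fun r : ℝ => m * r + b) x = m := by
  simpa using (((hasDerivAt_id x).const_mul m).add_const b).deriv

private lemma dquad (p q z : ℝ) : deriv (fun s : ℝ => p * s^2 + q) z = 2*p*z := by
  have h := (((hasDerivAt_pow 2 z).const_mul p).add_const q).deriv
  rw [h]; push_cast; ring

private lemma master (n : ℕ) (c β : ℝ) (v : ℝ → (Fin n → ℝ) → ℝ → ℝ)
    (hv : ∀ x y t, v x y t = c * ((∑ i, (y i)^2) - 4*x*t)/t^2 + β)
    (x : ℝ) (y : Fin n → ℝ) (t : ℝ) (ht : t ≠ 0) :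
    deriv (fun s => deriv (fun r => v r y s) x) t
      - deriv (fun r => v r y t * deriv (fun r' => v r' y t) r) x
      - (∑ i, deriv (deriv (fun s => v x (Function.update y i s) t)) (y i))
      + (2*((n:ℝ)-1)/(n:ℝ)) * (deriv (fun r => v r y t) x)^2
    = 4*c/t^2 - 16*c^2/t^2 - (n:ℝ)*(2*c/t^2)
      + (2*((n:ℝ)-1)/(n:ℝ))*(16*c^2/t^2) := by
  have hx : ∀ (x' : ℝ) (s : ℝ), deriv (fun r => v r y s) x' = -(4*c*s)/s^2 := by
    intro x' s
    have e : (fun r => v r y s)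
        = fun r => (-(4*c*s)/s^2) * r + (c*(∑ i, (y i)^2)/s^2 + β) := by
      funext r; rw [hv]; ring
    rw [e, dlin]
  have h1 : deriv (fun s => deriv (fun r => v r y s) x) t = 4*c/t^2 := by
    have e : (fun s => deriv (fun r => v r y s) x) = fun s => (-(4*c)) * s⁻¹ := by
      funext s; rw [hx]
      by_cases hs : s = 0
      · simp [hs]
      · field_simp
    rw [e, ((hasDerivAt_inv ht).const_mul (-(4*c))).deriv]
    field_simp
  have h2 : deriv (fun r => v r y t * deriv (fun r' => v r' y t) r) x
      = 16*c^2/t^2 := by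
    have e : (fun r => v r y t * deriv (fun r' => v r' y t) r)
        = fun r => ((-(4*c*t)/t^2) * (-(4*c*t)/t^2)) * r
            + ((c*(∑ i, (y i)^2)/t^2 + β) * (-(4*c*t)/t^2)) := by
      funext r
      rw [hx r t, hv]; ring
    rw [e, dlin]
    field_simp; ring
  have h3 : ∀ i, deriv (deriv (fun s => v x (Function.update y i s) t)) (y i)
      = 2*c/t^2 := by
    intro i
    have hsum : ∀ s : ℝ, (∑ j, (Function.update y i s j)^2)
        = s^2 + ∑ j ∈ Finset.univ.erase i, (y j)^2 := by
      intro s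
      have e : (fun j => (Function.update y i s j)^2)
          = Function.update (fun j => (y j)^2) i (s^2) := by
        funext j
        by_cases h : j = i
        · subst h; simp
        · simp [Function.update_of_ne h]
      rw [e, Finset.sum_update_of_mem (Finset.mem_univ i), ← Finset.erase_eq]
    have e : (fun s => v x (Function.update y i s) t)
        = fun s => (c/t^2)*s^2
            + (c*((∑ j ∈ Finset.univ.erase i, (y j)^2) - 4*x*t)/t^2 + β) := by
      funext s; rw [hv, hsum]; ring
    rw [e]
    have e2 : deriv (fun s : ℝ => (c/t^2)*s^2
        + (c*((∑ j ∈ Finset.univ.erase i, (y j)^2) - 4*x*t)/t^2 + β))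
        = fun z => (2*(c/t^2)) * z + 0 := by
      funext z; rw [dquad]; ring
    rw [e2, dlin]; ring
  have h3s : (∑ i, deriv (deriv (fun s => v x (Function.update y i s) t)) (y i))
      = (n:ℝ)*(2*c/t^2) := by
    simp only [h3]
    simp [Finset.sum_const, Finset.card_univ, mul_comm]
  have h4 : deriv (fun r => v r y t) x = -(4*c*t)/t^2 := hx x t
  rw [h1, h2, h3s, h4]
  have : (-(4*c*t)/t^2)^2 = 16*c^2/t^2 := by field_simp; ring
  rw [this]

/-- For `n > 2`, `u = (n/8)(Σ yᵢ² − 4xt)/t² + β` solves the `n`-dKP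
Einstein–Weyl equation, and for `α ≠ n/8` (with `α ≠ 0`) the corresponding
function is not a solution. -/
theorem stmt14 (n : ℕ) (hn : 2 < n) (β : ℝ)
    (u : ℝ → (Fin n → ℝ) → ℝ → ℝ)
    (hu : ∀ x y t, u x y t = ((n:ℝ)/8) * ((∑ i, (y i)^2) - 4*x*t)/t^2 + β) :
    (∀ (x : ℝ) (y : Fin n → ℝ) (t : ℝ), t ≠ 0 →
      deriv (fun s => deriv (fun r => u r y s) x) t
      - deriv (fun r => u r y t * deriv (fun r' => u r' y t) r) x
      - (∑ i, deriv (deriv (fun s => u x (Function.update y i s) t)) (y i))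
      + (2*((n:ℝ)-1)/(n:ℝ)) * (deriv (fun r => u r y t) x)^2 = 0)
    ∧ (∀ α : ℝ, α ≠ 0 → α ≠ (n:ℝ)/8 →
        ∀ v : ℝ → (Fin n → ℝ) → ℝ → ℝ,
          (∀ x y t, v x y t = α * ((∑ i, (y i)^2) - 4*x*t)/t^2 + β) →
          ¬ (∀ (x : ℝ) (y : Fin n → ℝ) (t : ℝ), t ≠ 0 →
            deriv (fun s => deriv (fun r => v r y s) x) t
            - deriv (fun r => v r y t * deriv (fun r' => v r' y t) r) x
            - (∑ i, deriv (deriv (fun s => v x (Function.update y i s) t)) (y i))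
            + (2*((n:ℝ)-1)/(n:ℝ)) * (deriv (fun r => v r y t) x)^2 = 0)) := by
  have hn0 : (n:ℝ) ≠ 0 := by positivity
  have hn2 : (2:ℝ) < (n:ℝ) := by exact_mod_cast hn
  constructor
  · intro x y t ht
    rw [master n ((n:ℝ)/8) β u hu x y t ht]
    field_simp
    ring
  · intro α hα0 hα8 v hv hsol
    have h := hsol 0 (fun _ => 0) 1 one_ne_zero
    rw [master n α β v hv 0 (fun _ => 0) 1 one_ne_zero] at h
    apply hα8
    have key : ((n:ℝ)-2) * (2*α) * (8*α - n) = 0 := by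
      field_simp at h
      nlinarith [h]
    rcases mul_eq_zero.mp key with h' | h'
    · rcases mul_eq_zero.mp h' with h'' | h''
      · linarith
      · exact absurd (by linarith : α = 0) hα0
    · field_simp; linarith
end

section
/- With the same setup (V_i = m_i V + n_i, m_1 = 1, n_1 = 0, F = b^{ij}m_i m_j, G = b^{ij}m_i n_j, H = b^{ij}n_i n_j, these now functions of u through b(u)), suppose V : I → ℝ is C¹ and satisfies the generalized Riccati equation V̇ = F V² + 2 G V + H. If u(x) is defined implicitly by Σ_i (m_i V(u)+n_i) x^i = C with nonvanishing Q̇ = Σ_i V̇_i x^i, then u satisfies the divergence-form equation ∂/∂x^i ( b^{ij}(u) ∂u/∂x^j ) = 0. -/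
open BigOperators

lemma sum_swap_symm {N : ℕ} (B : Matrix (Fin N) (Fin N) ℝ) (hB : B.IsSymm) (p q : Fin N → ℝ) :
    ∑ i, ∑ j, B i j * (p j * q i) = ∑ i, ∑ j, B i j * (p i * q j) := by
  rw [Finset.sum_comm]
  exact Finset.sum_congr rfl fun i _ => Finset.sum_congr rfl fun j _ => by rw [hB.apply]

lemma expand_quad {N : ℕ} (B : Matrix (Fin N) (Fin N) ℝ) (p q : Fin N → ℝ) (s : ℝ) :
    ∑ i, (∑ j, B i j * (p j * s + q j)) * (p i * s + q i)
      = (∑ i, ∑ j, B i j * p i * p j) * s ^ 2 + (∑ i, ∑ j, B i j * (p i * q j)) * s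
        + (∑ i, ∑ j, B i j * (p j * q i)) * s + ∑ i, ∑ j, B i j * q i * q j := by
  simp only [Finset.sum_mul, ← Finset.sum_add_distrib]
  exact Finset.sum_congr rfl fun i _ => Finset.sum_congr rfl fun j _ => by ring

/-- Hyperplane ansatz for the divergence-form equation
`∂ᵢ(bⁱʲ(u) ∂ⱼu) = 0` via the generalized Riccati equation (Proposition 5.2). -/
theorem stmt16 {N : ℕ} (hN : 0 < N) (b : ℝ → Matrix (Fin N) (Fin N) ℝ)
    (hb : ∀ i j, ContDiff ℝ (⊤ : ℕ∞) (fun t => b t i j))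
    (hbsymm : ∀ t, (b t).IsSymm)
    (m n : Fin N → ℝ) (hm : m ⟨0, hN⟩ = 1) (hn : n ⟨0, hN⟩ = 0)
    (F G H : ℝ → ℝ)
    (hF : ∀ t, F t = ∑ i, ∑ j, b t i j * m i * m j)
    (hG : ∀ t, G t = ∑ i, ∑ j, b t i j * m i * n j)
    (hH : ∀ t, H t = ∑ i, ∑ j, b t i j * n i * n j)
    (V : ℝ → ℝ) (hV : ContDiff ℝ 1 V)
    (hode : ∀ t, deriv V t = F t * (V t)^2 + 2 * G t * V t + H t)
    (C : ℝ) (u : (Fin N → ℝ) → ℝ) (x₀ : Fin N → ℝ)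
    (hu : ContDiffAt ℝ 2 u x₀)
    (hrel : ∀ᶠ x in nhds x₀, ∑ i, (m i * V (u x) + n i) * x i = C)
    (hQd : (∑ i, (m i * deriv V (u x₀)) * x₀ i) ≠ 0) :
    ∑ i, fderiv ℝ (fun x => ∑ j, b (u x) i j * fderiv ℝ u x (Pi.single j 1))
      x₀ (Pi.single i 1) = 0 := by
  -- basic differentiability facts
  have hVd : Differentiable ℝ V := hV.differentiable one_ne_zero
  have hbd : ∀ i j, Differentiable ℝ (fun t => b t i j) := fun i j => (hb i j).differentiable (by simp)
  have hFd : Differentiable ℝ F := by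
    have : F = fun t => ∑ i, ∑ j, b t i j * m i * m j := funext hF
    rw [this]
    exact Differentiable.fun_sum fun i _ => Differentiable.fun_sum fun j _ =>
      ((hbd i j).mul_const _).mul_const _
  have hGd : Differentiable ℝ G := by
    have : G = fun t => ∑ i, ∑ j, b t i j * m i * n j := funext hG
    rw [this]
    exact Differentiable.fun_sum fun i _ => Differentiable.fun_sum fun j _ =>
      ((hbd i j).mul_const _).mul_const _
  have hHd : Differentiable ℝ H := by
    have : H = fun t => ∑ i, ∑ j, b t i j * n i * n j := funext hH
    rw [this]
    exact Differentiable.fun_sum fun i _ => Differentiable.fun_sum fun j _ =>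
      ((hbd i j).mul_const _).mul_const _
  have hdVd : Differentiable ℝ (deriv V) := by
    have : deriv V = fun t => F t * (V t)^2 + 2 * G t * V t + H t := funext hode
    rw [this]
    exact ((hFd.mul (hVd.pow 2)).add ((hGd.const_mul 2).mul hVd)).add hHd
  -- the flux coefficient functions
  set W : Fin N → ℝ → ℝ := fun i t => ∑ j, b t i j * (m j * V t + n j) with hWdef
  have hWd : ∀ i, Differentiable ℝ (W i) := fun i =>
    Differentiable.fun_sum fun j _ => (hbd i j).mul ((hVd.const_mul (m j)).add_const (n j))
  -- algebraic identity 1 : ∑ Wᵢ (mᵢ V + nᵢ) = V'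
  have id1 : ∀ t, ∑ i, W i t * (m i * V t + n i) = deriv V t := by
    intro t
    rw [hode t, hF t, hG t, hH t]
    have hq := expand_quad (b t) m n (V t)
    rw [hWdef]
    simp only []
    rw [hq, sum_swap_symm (b t) (hbsymm t) m n]
    have e1 : ∑ i, ∑ j, b t i j * (m i * n j) = ∑ i, ∑ j, b t i j * m i * n j :=
      Finset.sum_congr rfl fun i _ => Finset.sum_congr rfl fun j _ => by ring
    rw [e1]; ring
  -- algebraic identity 2 : ∑ mᵢ Wᵢ = F V + G
  have id2 : ∀ t, ∑ i, m i * W i t = F t * V t + G t := by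
    intro t
    rw [hF t, hG t, hWdef]
    simp only [Finset.mul_sum, Finset.sum_mul]
    rw [← Finset.sum_add_distrib]
    refine Finset.sum_congr rfl fun i _ => ?_
    rw [← Finset.sum_add_distrib]
    exact Finset.sum_congr rfl fun j _ => by ring
  set u₀ := u x₀ with hu₀
  -- identity 3 : derivative of identity 1
  have id3 : ∑ i, (deriv (W i) u₀ * (m i * V u₀ + n i) + W i u₀ * (m i * deriv V u₀))
      = deriv (deriv V) u₀ := by
    have h : HasDerivAt (fun t => ∑ i, W i t * (m i * V t + n i))
        (∑ i, (deriv (W i) u₀ * (m i * V u₀ + n i) + W i u₀ * (m i * deriv V u₀))) u₀ :=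
      HasDerivAt.fun_sum fun i _ =>
        ((hWd i u₀).hasDerivAt).mul (((hVd u₀).hasDerivAt.const_mul (m i)).add_const (n i))
    have hfun : (fun t => ∑ i, W i t * (m i * V t + n i)) = deriv V := funext id1
    rw [hfun] at h
    exact h.deriv.symm
  have id3' : ∑ i, deriv (W i) u₀ * (m i * V u₀ + n i)
      = deriv (deriv V) u₀ - deriv V u₀ * (F u₀ * V u₀ + G u₀) := by
    rw [← id2 u₀]
    have hsplit : ∑ i, (deriv (W i) u₀ * (m i * V u₀ + n i) + W i u₀ * (m i * deriv V u₀))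
        = (∑ i, deriv (W i) u₀ * (m i * V u₀ + n i)) + deriv V u₀ * ∑ i, m i * W i u₀ := by
      rw [Finset.sum_add_distrib, Finset.mul_sum]
      congr 1
      exact Finset.sum_congr rfl fun i _ => by ring
    rw [hsplit] at id3
    linarith [id3]
  -- u is C² (hence C¹) near x₀
  have hue : ∀ᶠ y in nhds x₀, ContDiffAt ℝ 2 u y := hu.eventually (by norm_num)
  -- the hyperplane relation has vanishing derivative near x₀
  have hQ0 : ∀ᶠ y in nhds x₀,
      fderiv ℝ (fun x => ∑ i, (m i * V (u x) + n i) * x i) y = 0 := by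
    filter_upwards [hrel.eventually_nhds] with y hy
    have heq : (fun x => ∑ i, (m i * V (u x) + n i) * x i) =ᶠ[nhds y] fun _ => C := hy
    rw [heq.fderiv_eq, fderiv_fun_const]
    rfl
  -- implicit differentiation: the key first-order relation
  have key : ∀ᶠ y in nhds x₀, ∀ j,
      deriv V (u y) * fderiv ℝ u y (Pi.single j 1) * (∑ k, m k * y k)
        + (m j * V (u y) + n j) = 0 := by
    filter_upwards [hue, hQ0] with y hy hQy j
    have hud : DifferentiableAt ℝ u y := hy.differentiableAt (by norm_num)
    have hQder : HasFDerivAt (fun x => ∑ i, (m i * V (u x) + n i) * x i)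
        (∑ i, ((m i * V (u y) + n i) • ContinuousLinearMap.proj i
          + (y i) • (m i • (deriv V (u y) • fderiv ℝ u y)))) y :=
      HasFDerivAt.fun_sum fun i _ =>
        ((((hVd (u y)).hasDerivAt.comp_hasFDerivAt y hud.hasFDerivAt).const_mul (m i)).add_const
          (n i)).fun_mul ((ContinuousLinearMap.proj i : (Fin N → ℝ) →L[ℝ] ℝ).hasFDerivAt (x := y))
    have h0 := hQder.fderiv
    rw [hQy] at h0
    have h1 := congrArg (fun L : (Fin N → ℝ) →L[ℝ] ℝ => L (Pi.single j 1)) h0.symm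
    simp only [ContinuousLinearMap.sum_apply, ContinuousLinearMap.add_apply,
      ContinuousLinearMap.smul_apply, ContinuousLinearMap.proj_apply, smul_eq_mul,
      ContinuousLinearMap.zero_apply, Pi.single_apply] at h1
    rw [Finset.sum_add_distrib] at h1
    simp only [mul_ite, mul_one, mul_zero, Finset.sum_ite_eq', Finset.mem_univ, if_true] at h1
    rw [← h1, Finset.mul_sum, add_comm]
    congr 1
    exact Finset.sum_congr rfl fun k _ => by ring
  -- nonvanishing of the denominator
  have hP0 : deriv V u₀ * (∑ k, m k * x₀ k) ≠ 0 := by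
    have hrw : ∑ i, (m i * deriv V u₀) * x₀ i = deriv V u₀ * ∑ k, m k * x₀ k := by
      rw [Finset.mul_sum]
      exact Finset.sum_congr rfl fun i _ => by ring
    rw [← hrw]
    exact hQd
  have hPcont : ContinuousAt (fun y => deriv V (u y) * ∑ k, m k * y k) x₀ := by
    exact ((hdVd.continuous.continuousAt).comp hu.continuousAt).mul
      ((continuous_finset_sum _ fun k _ => continuous_const.mul (continuous_apply k)).continuousAt)
  have hPne : ∀ᶠ y in nhds x₀, deriv V (u y) * (∑ k, m k * y k) ≠ 0 :=
    hPcont.eventually_ne hP0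
  -- solve for the gradient of u
  have key2 : ∀ᶠ y in nhds x₀, ∀ j,
      fderiv ℝ u y (Pi.single j 1)
        = -(m j * V (u y) + n j) / (deriv V (u y) * ∑ k, m k * y k) := by
    filter_upwards [key, hPne] with y hk hP j
    rw [eq_div_iff hP]
    have := hk j
    linarith [this]
  -- the flux equals an explicit composite near x₀
  have heq : ∀ i : Fin N,
      (fun x => ∑ j, b (u x) i j * fderiv ℝ u x (Pi.single j 1)) =ᶠ[nhds x₀]
      (fun y => -(W i (u y)) * ((deriv V (u y)) * ∑ k, m k * y k)⁻¹) := by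
    intro i
    filter_upwards [key2, hPne] with y h2 hP
    calc ∑ j, b (u y) i j * fderiv ℝ u y (Pi.single j 1)
        = ∑ j, b (u y) i j * (-(m j * V (u y) + n j) / (deriv V (u y) * ∑ k, m k * y k)) :=
          Finset.sum_congr rfl fun j _ => by rw [h2 j]
      _ = (∑ j, b (u y) i j * (m j * V (u y) + n j))
            * (-((deriv V (u y) * ∑ k, m k * y k)⁻¹)) := by
          rw [Finset.sum_mul]
          exact Finset.sum_congr rfl fun j _ => by ring
      _ = -(W i (u y)) * ((deriv V (u y)) * ∑ k, m k * y k)⁻¹ := by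
          rw [hWdef]; ring
  -- differentiate the explicit composite
  have hud : DifferentiableAt ℝ u x₀ := hu.differentiableAt (by norm_num)
  have hfderiv : ∀ i : Fin N,
      fderiv ℝ (fun y => -(W i (u y)) * ((deriv V (u y)) * ∑ k, m k * y k)⁻¹) x₀
          (Pi.single i 1)
        = -(deriv (W i) u₀ * fderiv ℝ u x₀ (Pi.single i 1))
            * ((deriv V u₀) * ∑ k, m k * x₀ k)⁻¹
          + -(W i u₀) * (-(((deriv V u₀) * ∑ k, m k * x₀ k) ^ 2)⁻¹
              * (deriv V u₀ * m i
                 + (∑ k, m k * x₀ k) * (deriv (deriv V) u₀ * fderiv ℝ u x₀ (Pi.single i 1)))) := by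
    intro i
    have hWc : HasFDerivAt (fun y => W i (u y)) (deriv (W i) u₀ • fderiv ℝ u x₀) x₀ :=
      (hWd i u₀).hasDerivAt.comp_hasFDerivAt x₀ hud.hasFDerivAt
    have hdVc : HasFDerivAt (fun y => deriv V (u y)) (deriv (deriv V) u₀ • fderiv ℝ u x₀) x₀ :=
      (hdVd u₀).hasDerivAt.comp_hasFDerivAt x₀ hud.hasFDerivAt
    have hA : HasFDerivAt (fun y : Fin N → ℝ => ∑ k, m k * y k)
        (∑ k, m k • (ContinuousLinearMap.proj k : (Fin N → ℝ) →L[ℝ] ℝ)) x₀ :=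
      HasFDerivAt.fun_sum fun k _ =>
        ((ContinuousLinearMap.proj k : (Fin N → ℝ) →L[ℝ] ℝ).hasFDerivAt (x := x₀)).const_mul (m k)
    have hden := hdVc.fun_mul hA
    have hinv := (hasDerivAt_inv hP0).comp_hasFDerivAt x₀ hden
    simp only [Function.comp_def] at hinv
    have hfull := hWc.fun_neg.fun_mul hinv
    rw [hfull.fderiv]
    simp only [ContinuousLinearMap.add_apply, ContinuousLinearMap.smul_apply,
      ContinuousLinearMap.neg_apply, ContinuousLinearMap.sum_apply,
      ContinuousLinearMap.proj_apply, smul_eq_mul, Pi.single_apply,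
      mul_ite, mul_one, mul_zero, Finset.sum_ite_eq', Finset.mem_univ, if_true]
    ring
  -- value of the gradient at x₀
  have hkey₀ := key2.self_of_nhds
  -- put everything together
  have hrA : deriv V u₀ ≠ 0 ∧ (∑ k, m k * x₀ k) ≠ 0 := mul_ne_zero_iff.mp hP0
  calc ∑ i, fderiv ℝ (fun x => ∑ j, b (u x) i j * fderiv ℝ u x (Pi.single j 1))
        x₀ (Pi.single i 1)
      = ∑ i, fderiv ℝ (fun y => -(W i (u y)) * ((deriv V (u y)) * ∑ k, m k * y k)⁻¹) x₀
          (Pi.single i 1) :=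
        Finset.sum_congr rfl fun i _ => by rw [(heq i).fderiv_eq]
    _ = ∑ i, ( ((((deriv V u₀) * ∑ k, m k * x₀ k) ^ 2)⁻¹ * deriv V u₀) * (m i * W i u₀)
          + (-(((((deriv V u₀) * ∑ k, m k * x₀ k) ^ 2 * ((deriv V u₀) * ∑ k, m k * x₀ k))⁻¹)
              * ((∑ k, m k * x₀ k) * deriv (deriv V) u₀))) * (W i u₀ * (m i * V u₀ + n i))
          + ((((deriv V u₀) * ∑ k, m k * x₀ k) ^ 2)⁻¹)
              * (deriv (W i) u₀ * (m i * V u₀ + n i)) ) := by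
        refine Finset.sum_congr rfl fun i _ => ?_
        rw [hfderiv i, hkey₀ i]
        rw [hu₀]
        ring
    _ = ((((deriv V u₀) * ∑ k, m k * x₀ k) ^ 2)⁻¹ * deriv V u₀) * (∑ i, m i * W i u₀)
          + (-(((((deriv V u₀) * ∑ k, m k * x₀ k) ^ 2 * ((deriv V u₀) * ∑ k, m k * x₀ k))⁻¹)
              * ((∑ k, m k * x₀ k) * deriv (deriv V) u₀)))
            * (∑ i, W i u₀ * (m i * V u₀ + n i))
          + ((((deriv V u₀) * ∑ k, m k * x₀ k) ^ 2)⁻¹)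
              * (∑ i, deriv (W i) u₀ * (m i * V u₀ + n i)) := by
        rw [Finset.sum_add_distrib, Finset.sum_add_distrib, ← Finset.mul_sum, ← Finset.mul_sum,
          ← Finset.mul_sum]
    _ = 0 := by
        rw [id2 u₀, id1 u₀, id3']
        field_simp
        ring
end

section
/- Let X, Z : I → ℝ be C¹ with X nonvanishing derivative, let η, α, ζ, k be constants with ζ ≠ 0, k ≠ −1, and suppose Ż = e^u Ẋ and Z^{k+1}(X² + η X − α²) = ζ Ẋ². If one changes independent variable to v = e^u, then X as a function of v satisfies X'' − ((2X+η)/(2(X²+ηX−α²))) (X')² + (1/v) X' − ((k+1)/(2ζ^{1/(k+1)})) v^{(k−1)/(k+1)} (X²+ηX−α²)^{1/(k+1)} (X')^{2k/(k+1)} = 0, assuming X²+ηX−α² > 0, Ẋ > 0, Z > 0 and ζ > 0. -/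
/-!
Differentiating `Z^{k+1} F(X) = ζ Ẋ²` (with `F(x) = x² + ηx − α²`) and using `Ż = eᵘ Ẋ`
gives, after cancelling `Ẋ > 0`, a linear expression for `Ẍ` in terms of `Z^k` and `Z^{k+1}`.
The constraint itself turns `Z^{k+1}` into `ζẊ²/F` and, taking `(k+1)`-th roots, `Z^k F / ζ`
into `F^{1/(k+1)} Ẋ^{2k/(k+1)} / ζ^{1/(k+1)}`. Substituting `Ẋ = v X'` and
`Ẍ = v² X'' + v X'` for `v = eᵘ` yields (3.5).
-/

open Real Topology

section ChangeOfVariable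

variable {X : ℝ → ℝ} {v : ℝ}

theorem hasDerivAt_comp_log (hX : DifferentiableAt ℝ X (log v)) (hv : v ≠ 0) :
    HasDerivAt (fun w => X (log w)) (deriv X (log v) / v) v := by
  rw [div_eq_mul_inv]
  exact hX.hasDerivAt.comp v (hasDerivAt_log hv)

theorem deriv_deriv_comp_log (hX : Differentiable ℝ X) (hX' : Differentiable ℝ (deriv X))
    (hv : v ≠ 0) :
    deriv (deriv fun w => X (log w)) v
      = (deriv (deriv X) (log v) - deriv X (log v)) / v ^ 2 := by
  have hev : deriv (fun w => X (log w)) =ᶠ[𝓝 v] fun w => deriv X (log w) / w := by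
    filter_upwards [isOpen_ne.mem_nhds hv] with w hw
    exact (hasDerivAt_comp_log (hX _) hw).deriv
  rw [hev.deriv_eq]
  refine ((hasDerivAt_comp_log (hX' _) hv).div (hasDerivAt_id' v) hv).deriv.trans ?_
  field_simp

end ChangeOfVariable

theorem two_mul_deriv_deriv_of_constraint {η α ζ k u : ℝ} {X Z : ℝ → ℝ}
    (hX : Differentiable ℝ X) (hX' : Differentiable ℝ (deriv X)) (hZ : Differentiable ℝ Z)
    (h1 : deriv Z u = exp u * deriv X u)
    (h2 : ∀ u, Z u ^ (k + 1) * (X u ^ 2 + η * X u - α ^ 2) = ζ * deriv X u ^ 2)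
    (hXu : deriv X u ≠ 0) (hZu : 0 < Z u) :
    (k + 1) * Z u ^ k * exp u * (X u ^ 2 + η * X u - α ^ 2) + Z u ^ (k + 1) * (2 * X u + η)
      = 2 * ζ * deriv (deriv X) u := by
  have hL : HasDerivAt (fun u => Z u ^ (k + 1) * (X u ^ 2 + η * X u - α ^ 2))
      ((k + 1) * Z u ^ k * deriv Z u * (X u ^ 2 + η * X u - α ^ 2)
        + Z u ^ (k + 1) * ((2 * X u + η) * deriv X u)) u := by
    refine (((hZ u).hasDerivAt.rpow_const (p := k + 1) (Or.inl hZu.ne')).mul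
      ((((hX u).hasDerivAt.pow 2).add ((hX u).hasDerivAt.const_mul η)).sub_const (α ^ 2))
      ).congr_deriv ?_
    rw [add_sub_cancel_right]
    simp only [Pi.add_apply, Pi.pow_apply]
    push_cast
    ring
  have hR : HasDerivAt (fun u => ζ * deriv X u ^ 2)
      (ζ * (2 * deriv X u * deriv (deriv X) u)) u := by
    simpa using ((hX' u).hasDerivAt.pow 2).const_mul ζ
  have h := (funext h2 ▸ hL).unique hR
  rw [h1] at h
  apply mul_right_cancel₀ hXu
  linear_combination h

theorem rpow_mul_div_eq_of_rpow_add_one_mul_eq {k ζ z F p : ℝ} (hk : k + 1 ≠ 0) (hζ : 0 < ζ)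
    (hz : 0 < z) (hF : 0 < F) (hp : 0 < p) (h : z ^ (k + 1) * F = ζ * p ^ 2) :
    z ^ k * F / ζ = F ^ (1 / (k + 1)) * p ^ (2 * k / (k + 1)) / ζ ^ (1 / (k + 1)) := by
  have hlog : (k + 1) * log z + log F = log ζ + 2 * log p := by
    have h' := congrArg log h
    rw [log_mul (by positivity) hF.ne', log_rpow hz, log_mul hζ.ne' (by positivity),
      log_pow] at h'
    push_cast at h'
    linarith
  refine log_injOn_pos (by positivity : (0 : ℝ) < _) (by positivity : (0 : ℝ) < _) ?_
  rw [log_div (by positivity) hζ.ne', log_mul (by positivity) hF.ne', log_rpow hz,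
    log_div (by positivity) (by positivity), log_mul (by positivity) (by positivity),
    log_rpow hF, log_rpow hp, log_rpow hζ]
  field_simp
  linear_combination k * hlog

theorem rpow_mul_div_rpow_eq {k v p : ℝ} (hk : k + 1 ≠ 0) (hv : 0 < v) (hp : 0 < p) :
    v ^ ((k - 1) / (k + 1)) * (p / v) ^ (2 * k / (k + 1)) = p ^ (2 * k / (k + 1)) / v := by
  rw [div_rpow hp.le hv.le, mul_div_left_comm, ← rpow_sub hv,
    show (k - 1) / (k + 1) - 2 * k / (k + 1) = -1 by field_simp; ring, rpow_neg_one]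
  exact (div_eq_mul_inv _ _).symm

theorem ode_of_constraint {η α ζ k x p q z v : ℝ} (hk : k + 1 ≠ 0) (hζ : 0 < ζ)
    (hF : 0 < x ^ 2 + η * x - α ^ 2) (hp : 0 < p) (hz : 0 < z) (hv : 0 < v)
    (hC : (k + 1) * z ^ k * v * (x ^ 2 + η * x - α ^ 2) + z ^ (k + 1) * (2 * x + η) = 2 * ζ * q)
    (hE : z ^ (k + 1) * (x ^ 2 + η * x - α ^ 2) = ζ * p ^ 2) :
    (q - p) / v ^ 2
      - (2 * x + η) / (2 * (x ^ 2 + η * x - α ^ 2)) * (p / v) ^ 2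
      + (1 / v) * (p / v)
      - (k + 1) / (2 * ζ ^ ((1 : ℝ) / (k + 1))) * v ^ ((k - 1) / (k + 1)) *
        (x ^ 2 + η * x - α ^ 2) ^ ((1 : ℝ) / (k + 1)) * (p / v) ^ (2 * k / (k + 1)) = 0 := by
  set F := x ^ 2 + η * x - α ^ 2
  have hroot : (k + 1) / (2 * ζ ^ ((1 : ℝ) / (k + 1))) * v ^ ((k - 1) / (k + 1)) *
      F ^ ((1 : ℝ) / (k + 1)) * (p / v) ^ (2 * k / (k + 1)) = (k + 1) / 2 * (z ^ k * F / ζ) / v := by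
    rw [mul_assoc _ (F ^ _), mul_comm (F ^ _), ← mul_assoc, mul_assoc _ (v ^ _),
      rpow_mul_div_rpow_eq hk hv hp, rpow_mul_div_eq_of_rpow_add_one_mul_eq hk hζ hz hF hp hE]
    ring
  have hq : q = ((2 * x + η) * p ^ 2 * ζ + (k + 1) * z ^ k * F ^ 2 * v) / (2 * ζ * F) := by
    rw [eq_div_iff (by positivity)]
    linear_combination (-F) * hC + (2 * x + η) * hE
  rw [hroot, hq]
  field_simp
  ring

/-- Passing from the first-order system `Ż = eᵘ Ẋ`, `Z^{k+1}(X²+ηX−α²) = ζẊ²`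
to the second-order ODE (3.5) for `X` as a function of `v = eᵘ`. -/
theorem stmt18 (η α ζ k : ℝ) (hζ : 0 < ζ) (hk : k ≠ -1)
    (X Z : ℝ → ℝ) (hX : ContDiff ℝ 2 X) (hZ : Differentiable ℝ Z)
    (h1 : ∀ u, deriv Z u = Real.exp u * deriv X u)
    (h2 : ∀ u, (Z u) ^ (k+1) * ((X u)^2 + η * X u - α^2) = ζ * (deriv X u)^2)
    (hpos1 : ∀ u, 0 < (X u)^2 + η * X u - α^2)
    (hpos2 : ∀ u, 0 < deriv X u) (hpos3 : ∀ u, 0 < Z u)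
    (Y : ℝ → ℝ) (hY : ∀ v, Y v = X (Real.log v)) :
    ∀ v > (0:ℝ),
      deriv (deriv Y) v
      - (2 * Y v + η) / (2 * ((Y v)^2 + η * Y v - α^2)) * (deriv Y v)^2
      + (1 / v) * deriv Y v
      - (k+1) / (2 * ζ ^ ((1:ℝ)/(k+1))) * v ^ ((k-1)/(k+1)) *
        ((Y v)^2 + η * Y v - α^2) ^ ((1:ℝ)/(k+1)) *
        (deriv Y v) ^ (2*k/(k+1)) = 0 := by
  intro v hv
  have hk1 : k + 1 ≠ 0 := fun h => hk (by linarith)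
  have hX1 : Differentiable ℝ X := hX.differentiable (by norm_num)
  have hX2 : Differentiable ℝ (deriv X) :=
    (contDiff_succ_iff_deriv.mp (show ContDiff ℝ (1 + 1) X from hX)).2.2.differentiable
      one_ne_zero
  obtain rfl : Y = fun w => X (log w) := funext hY
  have hC := two_mul_deriv_deriv_of_constraint hX1 hX2 hZ (h1 (log v)) h2
    (hpos2 (log v)).ne' (hpos3 (log v))
  rw [exp_log hv] at hC
  rw [deriv_deriv_comp_log hX1 hX2 hv.ne', (hasDerivAt_comp_log (hX1 _) hv.ne').deriv]
  exact ode_of_constraint hk1 hζ (hpos1 _) (hpos2 _) (hpos3 _) hv hC (h2 _)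
end
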